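/- Let 1 <= m < n be integers and let F be a bounded subset of R^n with upper box dim F <= m and max{m, upper box dim F} <= Assouad dim F < m(mn + 2(upper box dim F)(n-m))/(mn + (upper box dim F)(n-m)). Then for almost all V in G(n,m): upper box dim (pi_V F) >= upper box dim F - (Assouad dim F - m)(upper box dim F)/m, and this lower bound is strictly greater than (upper box dim F)/(1 + (1/m - 1/n)(upper box dim F)). -/

import Mathlib

open Filter MeasureTheory Metric Set

noncomputable section
open scoped Classical

variable {E : Type*}

/-- Minimal number of sets of diameter at most `r` needed to cover `F`. -/
def coverNum [PseudoMetricSpace E] (r : ℝ) (F : Set E) : ℕ :=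
  sInf {k : ℕ | ∃ I : Finset (Set E), I.card = k ∧ (∀ U ∈ I, Metric.diam U ≤ r) ∧
    F ⊆ ⋃ U ∈ I, U}

/-- Maximal cardinality of an `r`-separated subset of `F`. -/
def sepNum [PseudoMetricSpace E] (r : ℝ) (F : Set E) : ℕ :=
  sSup {k : ℕ | ∃ T : Finset E, T.card = k ∧ ↑T ⊆ F ∧
    ∀ x ∈ T, ∀ y ∈ T, x ≠ y → r ≤ dist x y}

/-- Upper box-counting dimension. -/
def ubDim [PseudoMetricSpace E] (F : Set E) : ℝ :=
  limsup (fun r : ℝ => Real.log (coverNum r F) / -Real.log r) (nhdsWithin 0 (Set.Ioi 0))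

/-- Lower box-counting dimension. -/
def lbDim [PseudoMetricSpace E] (F : Set E) : ℝ :=
  liminf (fun r : ℝ => Real.log (coverNum r F) / -Real.log r) (nhdsWithin 0 (Set.Ioi 0))

/-- Packing dimension, via countable covers by compact sets. -/
def packDim [PseudoMetricSpace E] (F : Set E) : ℝ :=
  sInf {d : ℝ | ∃ K : ℕ → Set E, (∀ j, IsCompact (K j)) ∧ F ⊆ ⋃ j, K j ∧
    ∀ j, ubDim (K j) ≤ d}

/-- Assouad dimension. -/
def assouadDim [PseudoMetricSpace E] (F : Set E) : ℝ :=
  sInf {α : ℝ | ∃ C : ℝ, 0 < C ∧ ∀ x ∈ F, ∀ r R : ℝ, 0 < r → r < R →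
    (coverNum r (Metric.ball x R ∩ F) : ℝ) ≤ C * (R / r) ^ α}

/-- Upper Assouad spectrum at `θ`. -/
def upperAssouadSpectrum [PseudoMetricSpace E] (θ : ℝ) (F : Set E) : ℝ :=
  sInf {α : ℝ | ∃ C : ℝ, 0 < C ∧ ∀ x ∈ F, ∀ r R : ℝ, 0 < r → 0 < R →
    r ≤ R ^ (1/θ) → R ^ (1/θ) < R → R < 1 →
    (coverNum r (Metric.ball x R ∩ F) : ℝ) ≤ C * (R / r) ^ α}

/-- Assouad spectrum at `θ` (with `r = R^{1/θ}`). -/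
def assouadSpectrum [PseudoMetricSpace E] (θ : ℝ) (F : Set E) : ℝ :=
  sInf {α : ℝ | ∃ C : ℝ, 0 < C ∧ ∀ x ∈ F, ∀ R : ℝ, 0 < R → R ^ (1/θ) < R → R < 1 →
    (coverNum (R ^ (1/θ)) (Metric.ball x R ∩ F) : ℝ) ≤ C * (R / R ^ (1/θ)) ^ α}

/-- Quasi-Assouad dimension: limit of the upper Assouad spectrum as `θ ↗ 1`. -/
def qaDim [PseudoMetricSpace E] (F : Set E) : ℝ :=
  limsup (fun θ : ℝ => upperAssouadSpectrum θ F) (nhdsWithin 1 (Set.Iio 1))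

/-- The kernel `φ_r^s(x) = min{1, (r/|x|)^s}` (equal to `1` at `x = 0`). -/
def riesz [NormedAddCommGroup E] (s r : ℝ) (x : E) : ℝ :=
  if x = 0 then 1 else min 1 ((r / ‖x‖) ^ s)

/-- The energy of a measure with respect to the kernel `φ_r^s`. -/
def energy [NormedAddCommGroup E] [MeasurableSpace E] (s r : ℝ) (μ : Measure E) : ℝ :=
  ∫ x, ∫ y, riesz s r (x - y) ∂μ ∂μ

/-- The capacity `C_r^s(F)`: reciprocal of the infimal energy over Borel probability
measures supported on the closure of `F`. -/
def capacity [NormedAddCommGroup E] [MeasurableSpace E] (s r : ℝ) (F : Set E) : ℝ :=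
  (sInf {e : ℝ | ∃ μ : Measure E, IsProbabilityMeasure μ ∧ μ (closure F) = 1 ∧
    e = energy s r μ})⁻¹

/-- Upper box dimension profile at exponent `s`. -/
def ubDimProfile [NormedAddCommGroup E] [MeasurableSpace E] (s : ℝ) (F : Set E) : ℝ :=
  limsup (fun r : ℝ => Real.log (capacity s r F) / -Real.log r) (nhdsWithin 0 (Set.Ioi 0))

/-- Lower box dimension profile at exponent `s`. -/
def lbDimProfile [NormedAddCommGroup E] [MeasurableSpace E] (s : ℝ) (F : Set E) : ℝ :=
  liminf (fun r : ℝ => Real.log (capacity s r F) / -Real.log r) (nhdsWithin 0 (Set.Ioi 0))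

/-- Packing dimension profile at exponent `s`. -/
def packDimProfile [NormedAddCommGroup E] [MeasurableSpace E] (s : ℝ) (F : Set E) : ℝ :=
  sInf {d : ℝ | ∃ K : ℕ → Set E, (∀ j, IsCompact (K j)) ∧ F ⊆ ⋃ j, K j ∧
    ∀ j, ubDimProfile s (K j) ≤ d}

/-- The Grassmannian of `m`-dimensional subspaces of `ℝⁿ`. -/
def Grass (n m : ℕ) : Type :=
  {V : Submodule ℝ (EuclideanSpace ℝ (Fin n)) // Module.finrank ℝ V = m}

instance (n m : ℕ) : MeasurableSpace (Grass n m) := ⊤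

/-- Action of the orthogonal group on the Grassmannian. -/
def grassAction {n m : ℕ}
    (g : EuclideanSpace ℝ (Fin n) ≃ₗᵢ[ℝ] EuclideanSpace ℝ (Fin n)) (V : Grass n m) :
    Grass n m :=
  ⟨(V.1).map (g.toLinearEquiv : EuclideanSpace ℝ (Fin n) →ₗ[ℝ] EuclideanSpace ℝ (Fin n)),
    by rw [LinearEquiv.finrank_map_eq]; exact V.2⟩

/-- Image of `F` under orthogonal projection onto the subspace `V`. -/
def projImg {n : ℕ} (V : Submodule ℝ (EuclideanSpace ℝ (Fin n)))
    (F : Set (EuclideanSpace ℝ (Fin n))) : Set (EuclideanSpace ℝ (Fin n)) :=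
  (fun x => (V.orthogonalProjection x : EuclideanSpace ℝ (Fin n))) '' F

/-- The set of reals `∑_{k≥1} a_k 2^{-k}` with binary digits `a_k ∈ {0,1}` vanishing
outside `S`. -/
def XS (S : Set ℕ) : Set ℝ :=
  {x | ∃ a : ℕ → ℝ, (∀ k, a k = 0 ∨ a k = 1) ∧ (∀ k, k ∉ S → a k = 0) ∧
    x = ∑' k : ℕ, a (k + 1) * (2 : ℝ) ^ (-(k + 1 : ℤ))}

/-- The `n`-fold product `X_S^n ⊆ [0,1]^n`. -/
def XSn (n : ℕ) (S : Set ℕ) : Set (EuclideanSpace ℝ (Fin n)) :=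
  {x | ∀ i, x i ∈ XS S}

/-- Upper density of a set of naturals. -/
def upperDensity (S : Set ℕ) : ℝ :=
  limsup (fun k : ℕ => ((S ∩ Set.Icc 1 k).ncard : ℝ) / k) atTop

/-- Upper Banach density of a set of naturals. -/
def upperBanachDensity (S : Set ℕ) : ℝ :=
  limsup (fun k : ℕ => ⨆ l : ℕ, ((S ∩ Set.Ico l (l + k)).ncard : ℝ) / k) atTop

/-- `F` can be covered by at most `N` axis-parallel cubes of side `δ`. -/
def CoveredByCubes {n : ℕ} (F : Set (EuclideanSpace ℝ (Fin n))) (N δ : ℝ) : Prop :=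
  ∃ I : Finset (EuclideanSpace ℝ (Fin n)), (I.card : ℝ) ≤ N ∧
    F ⊆ ⋃ c ∈ I, {x | ∀ i, x i ∈ Set.Icc (c i) (c i + δ)}

end

/-!
Take the a.s. projection bound at `θ = 1 - B / (m + s + ε)`, where `B = dim_B F`,
`A = dim_A F` and `s = (A - m) B / m`. The spectrum bound `B / (1 - θ) = m + s + ε` and
`(A - m)(1 - θ) ≤ (A - m) B / m` make the loss at most `s + ε`; letting `ε → 0` along a
sequence gives the first claim (`ε > 0` keeps `θ > 0` when `A = B = m`). Clearing denominators, the strict inequality is exactly the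
upper bound assumed on `A`.
-/

lemma ubDim_nonneg {E : Type*} [PseudoMetricSpace E] (F : Set E) : 0 ≤ ubDim F := by
  have hlog : ∀ᶠ r in nhdsWithin (0 : ℝ) (Ioi 0),
      0 ≤ Real.log (coverNum r F) / -Real.log r := by
    filter_upwards [Ioo_mem_nhdsGT (show (0 : ℝ) < 1 by norm_num)] with r hr
    exact div_nonneg (Real.log_natCast_nonneg _) (neg_nonneg.2 (Real.log_nonpos hr.1.le hr.2.le))
  -- every eventual upper bound is `≥ 0`, and `sInf` of reals is `≥ 0` even in the junk cases
  rw [ubDim, limsup_eq]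
  refine Real.sInf_nonneg fun a ha => ?_
  obtain ⟨r, hr, hra⟩ := (hlog.and ha).exists
  exact hr.trans hra

lemma Filter.eventually_le_of_forall_pos_sub_le {α : Type*} {l : Filter α}
    [CountableInterFilter l] {f : α → ℝ} {b : ℝ}
    (h : ∀ ε > 0, ∀ᶠ x in l, b - ε ≤ f x) : ∀ᶠ x in l, b ≤ f x := by
  have hseq := eventually_countable_forall.2 fun k : ℕ => h (1 / (k + 1)) Nat.one_div_pos_of_nat
  filter_upwards [hseq] with x hx
  refine le_of_forall_sub_le fun ε hε => ?_
  obtain ⟨k, hk⟩ := exists_nat_one_div_lt hε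
  linarith [hx k]

lemma exists_mem_Ioo_max_le {m A B ε : ℝ} (hm : 0 < m) (hB : 0 < B) (hBm : B ≤ m)
    (hmA : m ≤ A) (hε : 0 < ε) (spec : ℝ → ℝ)
    (hspec : ∀ θ ∈ Ioo (0 : ℝ) 1, spec θ ≤ B / (1 - θ)) :
    ∃ θ ∈ Ioo (0 : ℝ) 1,
      max 0 (max (spec θ - m) ((A - m) * (1 - θ))) ≤ (A - m) * B / m + ε := by
  set c := m + (A - m) * B / m + ε
  have hs : 0 ≤ (A - m) * B / m := div_nonneg (mul_nonneg (sub_nonneg.2 hmA) hB.le) hm.le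
  have hc : m < c := by linarith
  have ht : B / c < 1 := (div_lt_one (by linarith)).2 (by linarith)
  have hθ : 1 - B / c ∈ Ioo (0 : ℝ) 1 :=
    ⟨by linarith, by linarith [div_pos hB (hm.trans hc)]⟩
  refine ⟨1 - B / c, hθ, max_le (by linarith) (max_le ?_ ?_)⟩
  · have := hspec _ hθ
    rw [sub_sub_cancel, div_div_cancel₀ hB.ne'] at this
    linarith
  · have htB : B / c ≤ B / m := div_le_div_of_nonneg_left hB.le hm hc.le
    calc (A - m) * (1 - (1 - B / c)) = (A - m) * (B / c) := by ring
      _ ≤ (A - m) * (B / m) := mul_le_mul_of_nonneg_left htB (sub_nonneg.2 hmA)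
      _ ≤ (A - m) * B / m + ε := by rw [mul_div_assoc]; linarith

section Arithmetic

variable {m n A B : ℝ}

lemma pos_of_lt_bound (hm : 0 < m) (hn : 0 < n) (hB : 0 ≤ B) (hmA : m ≤ A)
    (hA : A < m * (m * n + 2 * B * (n - m)) / (m * n + B * (n - m))) : 0 < B := by
  refine hB.lt_of_ne fun hB0 => ?_
  subst hB0
  simp only [mul_zero, zero_mul, add_zero] at hA
  rw [mul_div_cancel_right₀ _ (by positivity)] at hA
  linarith

lemma div_lt_sub_of_lt_bound (hm : 0 < m) (hmn : m < n) (hB : 0 < B)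
    (hA : A < m * (m * n + 2 * B * (n - m)) / (m * n + B * (n - m))) :
    B / (1 + (1 / m - 1 / n) * B) < B - (A - m) * B / m := by
  have hn : 0 < n := hm.trans hmn
  have hD : 0 < m * n + B * (n - m) := by nlinarith
  have hden : 1 + (1 / m - 1 / n) * B = (m * n + B * (n - m)) / (m * n) := by
    field_simp
  have hrhs : B - (A - m) * B / m = (2 * m - A) * B / m := by
    field_simp
    ring
  rw [lt_div_iff₀ hD] at hA
  rw [hden, hrhs, div_div_eq_mul_div, div_lt_div_iff₀ hD hm]
  nlinarith [mul_pos hB hm]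

end Arithmetic

theorem stmt_17_general {n m : ℕ} (hm : 1 ≤ m) (hmn : m < n)
    (F : Set (EuclideanSpace ℝ (Fin n)))
    (hub : ubDim F ≤ (m : ℝ))
    (h1 : max (m : ℝ) (ubDim F) ≤ assouadDim F)
    (h2 : assouadDim F <
      (m : ℝ) * ((m : ℝ) * n + 2 * ubDim F * ((n : ℝ) - m)) /
        ((m : ℝ) * n + ubDim F * ((n : ℝ) - m)))
    (μ : Measure (Grass n m))
    (hspec : ∀ θ : ℝ, θ ∈ Set.Ioo (0:ℝ) 1 →
      upperAssouadSpectrum θ F ≤ ubDim F / (1 - θ))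
    (hproj : ∀ θ : ℝ, θ ∈ Set.Ioo (0:ℝ) 1 → ∀ᵐ V ∂μ,
      ubDim F - max 0 (max (upperAssouadSpectrum θ F - m)
        ((assouadDim F - m) * (1 - θ))) ≤ ubDim (projImg V.1 F)) :
    (∀ᵐ V ∂μ,
      ubDim F - (assouadDim F - m) * ubDim F / m ≤ ubDim (projImg V.1 F)) ∧
      ubDim F / (1 + (1 / (m : ℝ) - 1 / (n : ℝ)) * ubDim F) <
        ubDim F - (assouadDim F - m) * ubDim F / m := by
  have hm0 : (0 : ℝ) < m := by exact_mod_cast hm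
  have hmn' : (m : ℝ) < n := by exact_mod_cast hmn
  have hmA := (le_max_left _ _).trans h1
  have hB := pos_of_lt_bound hm0 (hm0.trans hmn') (ubDim_nonneg F) hmA h2
  refine ⟨eventually_le_of_forall_pos_sub_le fun ε hε => ?_,
    div_lt_sub_of_lt_bound hm0 hmn' hB h2⟩
  obtain ⟨θ, hθ, hloss⟩ := exists_mem_Ioo_max_le hm0 hB hub hmA hε _ hspec
  filter_upwards [hproj θ hθ] with V hV
  linarith

/-- improved almost-sure projection bound under an Assouad dimension
restriction.  (The Assouad spectrum bound and the almost-sure projection estimate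
are taken as given.) -/
theorem stmt_17 {n m : ℕ} (hm : 1 ≤ m) (hmn : m < n)
    (F : Set (EuclideanSpace ℝ (Fin n))) (hb : Bornology.IsBounded F)
    (hub : ubDim F ≤ (m : ℝ))
    (h1 : max (m : ℝ) (ubDim F) ≤ assouadDim F)
    (h2 : assouadDim F <
      (m : ℝ) * ((m : ℝ) * n + 2 * ubDim F * ((n : ℝ) - m)) /
        ((m : ℝ) * n + ubDim F * ((n : ℝ) - m)))
    (μ : Measure (Grass n m)) [IsProbabilityMeasure μ]
    (hinv : ∀ g : EuclideanSpace ℝ (Fin n) ≃ₗᵢ[ℝ] EuclideanSpace ℝ (Fin n),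
      Measure.map (grassAction g) μ = μ)
    (hspec : ∀ θ : ℝ, θ ∈ Set.Ioo (0:ℝ) 1 →
      upperAssouadSpectrum θ F ≤ ubDim F / (1 - θ))
    (hproj : ∀ θ : ℝ, θ ∈ Set.Ioo (0:ℝ) 1 → ∀ᵐ V ∂μ,
      ubDim F - max 0 (max (upperAssouadSpectrum θ F - m)
        ((assouadDim F - m) * (1 - θ))) ≤ ubDim (projImg V.1 F)) :
    (∀ᵐ V ∂μ,
      ubDim F - (assouadDim F - m) * ubDim F / m ≤ ubDim (projImg V.1 F)) ∧
      ubDim F / (1 + (1 / (m : ℝ) - 1 / (n : ℝ)) * ubDim F) <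
        ubDim F - (assouadDim F - m) * ubDim F / m :=
  stmt_17_general hm hmn F hub h1 h2 μ hspec hproj
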